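/- arXiv:1903.11822 — 2 statements merged into one kernel-verified Lean document; each statement's English description precedes it below -/
import Mathlib

section
/- Let $q>1$, $p=1$. Suppose $c,\underline{k}:[0,\infty)\to[0,\infty)$ are continuous, and suppose there exist $\beta>0$, $c_6>0$, and $T_0>1$ such that $c(t)\ge \beta/t$ and $\underline{k}(t)\ge c_6\, t^{-(\beta(q-1)+2)}(\ln t)^{-1}$ for all $t\ge T_0$. Then $\int_{T_0}^\infty t^{1-q}\exp\big(-\int_0^t c(s)\,ds\big)\Big(\int_0^t \exp\big(\int_0^\tau c(s)\,ds\big)\,d\tau\Big)^q\,\underline{k}(t)\,dt=\infty$. -/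
/-!
Write `F t = ∫₀ᵗ c`, `G t = ∫₀ᵗ exp F`, so `G' = exp F`, and let `ρ` be the integrand. Since `c`
may be huge, `exp (-F)` admits no useful pointwise lower bound, so `ρ` is paired with the weight
`ψ = G' / (G log G (log log G)²) = -(1 / log log G)'`, whose integral is bounded: in `ρ ψ` the
factors `exp (∓F)` cancel. From `c ≥ β / t` one gets `G ≳ t^(1+β)`, and since
`x ↦ x^(q-1) / (log x (log log x)²)` is eventually increasing, the bound on `k` gives
`ρ ψ ≥ C φ²` with `φ = 1 / (t log t log log t)`. By AM-GM, `ρ ≥ 2 φ - ψ / C`, and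
`∫ φ = log log log T → ∞`.
-/

open Filter Set

section
open Real

lemma log_sub_log_le_sub_div {x y : ℝ} (hx : 0 < x) (hy : 0 < y) :
    log y - log x ≤ (y - x) / x := by
  have := log_le_sub_one_of_pos (div_pos hy hx)
  rwa [log_div hy.ne' hx.ne', ← div_self hx.ne', div_sub_div_same] at this

lemma log_exp_mul_div_mul_log_sq {a w : ℝ} (hw : 0 < w) (hlw : 0 < log w) :
    log (exp (a * w) / (w * log w ^ 2)) = a * w - (log w + 2 * log (log w)) := by
  rw [log_div (exp_pos _).ne' (by positivity), log_exp, log_mul hw.ne' (by positivity), log_pow]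
  push_cast
  ring

lemma monotoneOn_exp_mul_div_mul_log_sq {a : ℝ} (ha : 0 < a) :
    MonotoneOn (fun w => exp (a * w) / (w * log w ^ 2)) {w | 1 ≤ log w ∧ 3 ≤ a * w} := by
  rintro v ⟨hv1, hva⟩ w ⟨hw1, -⟩ hvw
  have hv : 0 < v := pos_of_mul_pos_right (by linarith) ha.le
  have hw : 0 < w := hv.trans_le hvw
  rw [← log_le_log_iff (by positivity) (by positivity),
    log_exp_mul_div_mul_log_sq hv (by linarith), log_exp_mul_div_mul_log_sq hw (by linarith)]
  have hlog : log w - log v ≤ (w - v) / v := log_sub_log_le_sub_div hv hw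
  have hloglog : log (log w) - log (log v) ≤ log w - log v :=
    (log_sub_log_le_sub_div (by linarith) (by linarith)).trans
      (div_le_self (by linarith [log_le_log hv hvw]) hv1)
  have hslope : 3 * ((w - v) / v) ≤ a * (w - v) := by
    rw [mul_div_assoc', div_le_iff₀ hv]
    nlinarith
  linarith

lemma HasDerivAt.log_log {f : ℝ → ℝ} {f' x : ℝ} (hf : HasDerivAt f f' x)
    (h : Real.log (f x) ≠ 0) :
    HasDerivAt (fun y => Real.log (Real.log (f y))) (f' / (f x * Real.log (f x))) x := by
  have hfx : f x ≠ 0 := fun h0 => h (by rw [h0, Real.log_zero])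
  convert (hf.log hfx).log h using 1
  field_simp

lemma eventually_rpow_div_mul_log_mul_log_log_sq_ge {a b A : ℝ} (ha : 0 < a) (hb : 0 < b)
    (hA : 0 < A) :
    ∀ᶠ t in atTop, ∀ x, A * t ^ b ≤ x → exp 1 ≤ log x ∧
      A ^ a * t ^ (a * b) / (8 * b * log t * log (log t) ^ 2) ≤
        x ^ a / (log x * log (log x) ^ 2) := by
  set V : ℝ → ℝ := fun t => log A + b * log t
  have hV : Tendsto V atTop atTop :=
    tendsto_atTop_add_const_left _ _ (tendsto_log_atTop.const_mul_atTop hb)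
  have hloglog : Tendsto (fun t => log (log t)) atTop atTop :=
    tendsto_log_atTop.comp tendsto_log_atTop
  filter_upwards [eventually_gt_atTop 0, hV.eventually_ge_atTop (exp 1),
    hV.eventually_ge_atTop (3 / a), tendsto_log_atTop.eventually_ge_atTop (log A / b),
    hloglog.eventually_ge_atTop (log (2 * b))] with t ht hVe hVa hlogA hlog2b x hx
  have hVpos : 0 < V t := (exp_pos 1).trans_le hVe
  have hVx : V t ≤ log x := by
    have := log_le_log (by positivity) hx
    rwa [log_mul hA.ne' (by positivity), log_rpow ht] at this
  have hV1 : 1 ≤ log (V t) := (le_log_iff_exp_le hVpos).2 hVe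
  have hx1 : 1 ≤ log (log x) := hV1.trans (log_le_log hVpos hVx)
  refine ⟨hVe.trans hVx, ?_⟩
  have hVle : V t ≤ 2 * b * log t := by
    have := (div_le_iff₀ hb).1 hlogA
    simp only [V]
    linarith
  have hlogt : 0 < log t := pos_of_mul_pos_right (hVpos.trans_le hVle) (by positivity)
  have hlogV : log (V t) ≤ 2 * log (log t) := by
    have := log_le_log hVpos hVle
    rw [log_mul (by positivity) hlogt.ne'] at this
    linarith
  have hden : V t * log (V t) ^ 2 ≤ 8 * b * log t * log (log t) ^ 2 :=
    calc V t * log (V t) ^ 2 ≤ (2 * b * log t) * (2 * log (log t)) ^ 2 := by gcongr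
      _ = 8 * b * log t * log (log t) ^ 2 := by ring
  have hexpV : exp (a * V t) = A ^ a * t ^ (a * b) := by
    simp only [V]
    rw [mul_add, exp_add, rpow_def_of_pos hA, rpow_def_of_pos ht]
    ring_nf
  have hmono := monotoneOn_exp_mul_div_mul_log_sq ha ⟨hV1, (div_le_iff₀' ha).1 hVa⟩
    ⟨hx1, by nlinarith [(div_le_iff₀' ha).1 hVa]⟩ hVx
  calc A ^ a * t ^ (a * b) / (8 * b * log t * log (log t) ^ 2)
      ≤ exp (a * V t) / (V t * log (V t) ^ 2) := by rw [hexpV]; gcongr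
    _ ≤ exp (a * log x) / (log x * log (log x) ^ 2) := hmono
    _ = x ^ a / (log x * log (log x) ^ 2) := by
        rw [rpow_def_of_pos ((by positivity : 0 < A * t ^ b).trans_le hx), mul_comm]

lemma tendsto_integral_atTop_of_hasDerivAt_le {ρ H H' : ℝ → ℝ} {a : ℝ}
    (hρ : ContinuousOn ρ (Ici a)) (hH : ∀ᶠ t in atTop, HasDerivAt H (H' t) t)
    (hle : ∀ᶠ t in atTop, H' t ≤ ρ t) (hHtop : Tendsto H atTop atTop) :
    Tendsto (fun T => ∫ t in a..T, ρ t) atTop atTop := by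
  obtain ⟨b, hb⟩ := eventually_atTop.1 ((hH.and hle).and (eventually_ge_atTop a))
  have hab : a ≤ b := (hb b le_rfl).2
  have hρint : ∀ c d, a ≤ c → c ≤ d → IntervalIntegrable ρ MeasureTheory.volume c d :=
    fun c d hc hcd => (hρ.mono fun x hx => hc.trans hx.1).intervalIntegrable_of_Icc hcd
  refine tendsto_atTop_mono' atTop ?_
    (tendsto_atTop_add_const_left _ ((∫ t in a..b, ρ t) - H b) hHtop)
  filter_upwards [eventually_ge_atTop b] with T hT
  have hsub : H T - H b ≤ ∫ t in b..T, ρ t :=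
    intervalIntegral.sub_le_integral_of_hasDeriv_right_of_le hT
      (fun x hx => (hb x hx.1).1.1.continuousAt.continuousWithinAt)
      (fun x hx => (hb x hx.1.le).1.1.hasDerivWithinAt)
      ((hρ.mono fun x hx => hab.trans hx.1).integrableOn_Icc)
      (fun x hx => (hb x hx.1.le).1.2)
  rw [← intervalIntegral.integral_add_adjacent_intervals (hρint a b le_rfl hab)
    (hρint b T hab hT)]
  linarith

lemma mul_log_div_le_integral {c : ℝ → ℝ} {β T0 t : ℝ} (hc : Continuous c) (hT0 : 0 < T0)
    (hcl : ∀ s ≥ T0, β / s ≤ c s) (ht : T0 ≤ t) : β * log (t / T0) ≤ ∫ s in T0..t, c s := by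
  have hint : IntervalIntegrable (fun s => β / s) MeasureTheory.volume T0 t :=
    (continuousOn_const.div continuousOn_id fun s hs =>
      (hT0.trans_le hs.1).ne').intervalIntegrable_of_Icc ht
  calc β * log (t / T0) = ∫ s in T0..t, β / s := by
        simp_rw [div_eq_mul_inv β]
        rw [intervalIntegral.integral_const_mul, integral_inv_of_pos hT0 (hT0.trans_le ht)]
    _ ≤ ∫ s in T0..t, c s :=
        intervalIntegral.integral_mono_on ht hint (hc.intervalIntegrable _ _)
          fun s hs => hcl s hs.1

lemma mul_rpow_le_exp_integral {c : ℝ → ℝ} {β T0 t : ℝ} (hc : Continuous c) (hT0 : 0 < T0)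
    (hcl : ∀ s ≥ T0, β / s ≤ c s) (ht : T0 ≤ t) :
    exp (∫ s in (0:ℝ)..T0, c s) / T0 ^ β * t ^ β ≤ exp (∫ s in (0:ℝ)..t, c s) := by
  have ht0 : 0 < t := hT0.trans_le ht
  calc exp (∫ s in (0:ℝ)..T0, c s) / T0 ^ β * t ^ β
      = exp (∫ s in (0:ℝ)..T0, c s) * exp (β * log (t / T0)) := by
        rw [mul_comm β, ← rpow_def_of_pos (div_pos ht0 hT0), div_rpow ht0.le hT0.le]
        ring
    _ ≤ exp (∫ s in (0:ℝ)..T0, c s) * exp (∫ s in T0..t, c s) := by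
        gcongr
        exact mul_log_div_le_integral hc hT0 hcl ht
    _ = exp (∫ s in (0:ℝ)..t, c s) := by
        rw [← exp_add, intervalIntegral.integral_add_adjacent_intervals
          (hc.intervalIntegrable _ _) (hc.intervalIntegrable _ _)]

lemma eventually_mul_rpow_le_integral {g : ℝ → ℝ} {D β T0 : ℝ} (hg : Continuous g)
    (hg0 : ∀ τ, 0 ≤ g τ) (hD : 0 ≤ D) (hβ : 0 ≤ β) (hgl : ∀ τ ≥ T0, D * τ ^ β ≤ g τ) :
    ∀ᶠ t in atTop, D / 2 ^ (1 + β) * t ^ (1 + β) ≤ ∫ τ in (0:ℝ)..t, g τ := by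
  filter_upwards [eventually_ge_atTop (2 * T0), eventually_ge_atTop 0] with t hT0t ht
  have hhalf : 0 ≤ ∫ τ in (0:ℝ)..t / 2, g τ :=
    intervalIntegral.integral_nonneg (by linarith) fun τ _ => hg0 τ
  have hupper : ∫ τ in t / 2..t, D * (t / 2) ^ β ≤ ∫ τ in t / 2..t, g τ :=
    intervalIntegral.integral_mono_on (by linarith) intervalIntegrable_const
      (hg.intervalIntegrable _ _) fun τ hτ =>
        (mul_le_mul_of_nonneg_left (rpow_le_rpow (by linarith) hτ.1 hβ) hD).trans
          (hgl τ (by linarith [hτ.1]))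
  have hconst : ∫ τ in t / 2..t, D * (t / 2) ^ β = D / 2 ^ (1 + β) * t ^ (1 + β) := by
    rw [intervalIntegral.integral_const, smul_eq_mul, div_mul_eq_mul_div, mul_div_assoc,
      ← div_rpow ht zero_le_two, rpow_one_add' (by linarith) (by linarith)]
    ring
  rw [← intervalIntegral.integral_add_adjacent_intervals (b := t / 2)
    (hg.intervalIntegrable _ _) (hg.intervalIntegrable _ _)]
  linarith

lemma mul_sq_le_integrand_mul {q β c6 A t f x κ : ℝ} (hβ : 0 < β) (hc6 : 0 ≤ c6)
    (hA : 0 ≤ A) (ht : 1 < t) (hllt : 0 < log (log t)) (hx : 0 < x)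
    (hκ : c6 * t ^ (-(β * (q - 1) + 2)) * (log t)⁻¹ ≤ κ)
    (hbound : A ^ (q - 1) * t ^ ((q - 1) * (1 + β)) / (8 * (1 + β) * log t * log (log t) ^ 2) ≤
      x ^ (q - 1) / (log x * log (log x) ^ 2)) :
    c6 * (A ^ (q - 1) / (8 * (1 + β))) * (t⁻¹ / (log t * log (log t))) ^ 2 ≤
      (t ^ (1 - q) * exp (-f) * x ^ q * κ) * (exp f / (x * log x) / log (log x) ^ 2) := by
  have ht0 : 0 < t := by linarith
  have hlt : 0 < log t := log_pos ht
  have hpow :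
      t ^ (1 - q) * t ^ (-(β * (q - 1) + 2)) * t ^ ((q - 1) * (1 + β)) = (t ^ 2)⁻¹ := by
    rw [← rpow_add ht0, ← rpow_add ht0,
      show 1 - q + -(β * (q - 1) + 2) + (q - 1) * (1 + β) = -2 by ring, rpow_neg ht0.le,
      rpow_two]
  calc c6 * (A ^ (q - 1) / (8 * (1 + β))) * (t⁻¹ / (log t * log (log t))) ^ 2
      = c6 * A ^ (q - 1) * (t ^ 2)⁻¹ * (log t)⁻¹ /
          (8 * (1 + β) * log t * log (log t) ^ 2) := by
        field_simp
    _ = t ^ (1 - q) * (c6 * t ^ (-(β * (q - 1) + 2)) * (log t)⁻¹) *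
          (A ^ (q - 1) * t ^ ((q - 1) * (1 + β)) / (8 * (1 + β) * log t * log (log t) ^ 2)) := by
        rw [← hpow]
        ring
    _ ≤ t ^ (1 - q) * κ * (x ^ (q - 1) / (log x * log (log x) ^ 2)) := by
        have hκ0 : 0 ≤ κ :=
          (by positivity : (0:ℝ) ≤ c6 * t ^ (-(β * (q - 1) + 2)) * (log t)⁻¹).trans hκ
        gcongr
    _ = (t ^ (1 - q) * exp (-f) * x ^ q * κ) * (exp f / (x * log x) / log (log x) ^ 2) := by
        rw [rpow_sub_one hx.ne', exp_neg]
        field_simp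

lemma tendsto_integral_rpow_mul_exp_neg_mul_rpow_mul {q β c6 A T0 : ℝ} {F G k : ℝ → ℝ}
    (hq : 1 < q) (hβ : 0 < β) (hc6 : 0 < c6) (hA : 0 < A) (hT0 : 0 < T0)
    (hF : Continuous F) (hk : Continuous k) (hG : ∀ t, HasDerivAt G (exp (F t)) t)
    (hGlb : ∀ᶠ t in atTop, A * t ^ (1 + β) ≤ G t)
    (hkl : ∀ᶠ t in atTop, c6 * t ^ (-(β * (q - 1) + 2)) * (log t)⁻¹ ≤ k t) :
    Tendsto (fun T => ∫ t in T0..T, t ^ (1 - q) * exp (-F t) * G t ^ q * k t) atTop atTop := by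
  set C := c6 * (A ^ (q - 1) / (8 * (1 + β)))
  have hC : 0 < C := by positivity
  have hloglog : Tendsto (fun t => log (log t)) atTop atTop :=
    tendsto_log_atTop.comp tendsto_log_atTop
  have hlarge : ∀ᶠ t in atTop, 1 < t ∧ 0 < log (log t) ∧ 0 < G t ∧ 0 < log (G t) ∧
      1 ≤ log (log (G t)) ∧
      A ^ (q - 1) * t ^ ((q - 1) * (1 + β)) / (8 * (1 + β) * log t * log (log t) ^ 2) ≤
        G t ^ (q - 1) / (log (G t) * log (log (G t)) ^ 2) := by
    filter_upwards [eventually_gt_atTop 1, hloglog.eventually_gt_atTop 0, hGlb,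
      eventually_rpow_div_mul_log_mul_log_log_sq_ge (by linarith : 0 < q - 1)
        (by linarith : 0 < 1 + β) hA] with t ht hllt hGt hgrowth
    obtain ⟨hlG, hbound⟩ := hgrowth _ hGt
    exact ⟨ht, hllt, (by positivity : 0 < A * t ^ (1 + β)).trans_le hGt,
      (exp_pos 1).trans_le hlG, (le_log_iff_exp_le ((exp_pos 1).trans_le hlG)).2 hlG, hbound⟩
  refine tendsto_integral_atTop_of_hasDerivAt_le (a := T0)
    (H := fun t => 2 * log (log (log t)) + C⁻¹ * (log (log (G t)))⁻¹)
    (H' := fun t => 2 * (t⁻¹ / (log t * log (log t))) +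
      C⁻¹ * (-(exp (F t) / (G t * log (G t))) / log (log (G t)) ^ 2)) ?_ ?_ ?_ ?_
  · have hGc : Continuous G := continuous_iff_continuousAt.2 fun t => (hG t).continuousAt
    refine ContinuousOn.mul (ContinuousOn.mul (ContinuousOn.mul ?_ (by fun_prop))
      (hGc.continuousOn.rpow_const fun _ _ => Or.inr (by linarith))) hk.continuousOn
    exact continuousOn_id.rpow_const fun t ht => Or.inl (hT0.trans_le ht).ne'
  · filter_upwards [hlarge] with t ⟨ht, hllt, _, hlG, hllG, _⟩
    exact (((hasDerivAt_log (by positivity)).log_log hllt.ne').const_mul 2).add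
      ((((hG t).log_log hlG.ne').inv (by positivity)).const_mul C⁻¹)
  · filter_upwards [hlarge, hkl] with t ⟨ht, hllt, hGt, hlG, hllG, hbound⟩ hkt
    have hlt : 0 < log t := log_pos ht
    have hψ : 0 ≤ exp (F t) / (G t * log (G t)) / log (log (G t)) ^ 2 := by positivity
    have hρ : 0 ≤ t ^ (1 - q) * exp (-F t) * G t ^ q * k t := by
      refine mul_nonneg (mul_nonneg (by positivity) (rpow_nonneg hGt.le q)) ?_
      exact (by positivity : (0:ℝ) ≤ c6 * t ^ (-(β * (q - 1) + 2)) * (log t)⁻¹).trans hkt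
    have := two_mul_le_add_of_sq_le_mul hρ (mul_nonneg (inv_nonneg.2 hC.le) hψ)
      (by rw [mul_left_comm, le_inv_mul_iff₀ hC]
          exact mul_sq_le_integrand_mul hβ hc6.le hA.le ht hllt hGt hkt hbound)
    rw [neg_div, mul_neg]
    linarith
  · refine tendsto_atTop_mono' atTop ?_
      ((tendsto_log_atTop.comp hloglog).const_mul_atTop two_pos)
    filter_upwards [hlarge] with t ⟨_, _, _, _, hllG, _⟩
    have : 0 ≤ C⁻¹ * (log (log (G t)))⁻¹ := by positivity
    simp only [Function.comp_apply]
    linarith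

end

theorem divergence_condition_p_one_general
    (q β c6 T0 : ℝ) (hq : 1 < q) (hβ : 0 < β) (hc6 : 0 < c6) (hT0 : 1 < T0)
    (c k : ℝ → ℝ) (hc : Continuous c) (hk : Continuous k)
    (hcl : ∀ t ≥ T0, β / t ≤ c t)
    (hkl : ∀ t ≥ T0, c6 * t ^ (-(β * (q - 1) + 2)) * (Real.log t)⁻¹ ≤ k t) :
    Tendsto (fun T => ∫ t in T0..T,
        t ^ (1 - q) * Real.exp (-∫ s in (0:ℝ)..t, c s) *
          (∫ τ in (0:ℝ)..t, Real.exp (∫ s in (0:ℝ)..τ, c s)) ^ q * k t)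
      atTop atTop := by
  have hT0' : 0 < T0 := by linarith
  have hF : Continuous fun t => ∫ s in (0:ℝ)..t, c s :=
    intervalIntegral.continuous_primitive (fun a b => hc.intervalIntegrable a b) 0
  have hexpF : Continuous fun t => Real.exp (∫ s in (0:ℝ)..t, c s) := Real.continuous_exp.comp hF
  exact tendsto_integral_rpow_mul_exp_neg_mul_rpow_mul hq hβ hc6 (by positivity) hT0' hF hk
    (fun t => (hexpF.integral_hasStrictDerivAt 0 t).hasDerivAt)
    (eventually_mul_rpow_le_integral hexpF (fun _ => (Real.exp_pos _).le) (by positivity) hβ.le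
      fun t ht => mul_rpow_le_exp_integral hc hT0' hcl ht)
    ((eventually_ge_atTop T0).mono hkl)

theorem divergence_condition_p_one
    (q β c6 T0 : ℝ) (hq : 1 < q) (hβ : 0 < β) (hc6 : 0 < c6) (hT0 : 1 < T0)
    (c k : ℝ → ℝ) (hc : Continuous c) (hk : Continuous k)
    (hc0 : ∀ t, 0 ≤ c t) (hk0 : ∀ t, 0 ≤ k t)
    (hcl : ∀ t ≥ T0, β / t ≤ c t)
    (hkl : ∀ t ≥ T0, c6 * t ^ (-(β * (q - 1) + 2)) * (Real.log t)⁻¹ ≤ k t) :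
    Tendsto (fun T => ∫ t in T0..T,
        t ^ (1 - q) * Real.exp (-∫ s in (0:ℝ)..t, c s) *
          (∫ τ in (0:ℝ)..t, Real.exp (∫ s in (0:ℝ)..τ, c s)) ^ q * k t)
      atTop atTop :=
  divergence_condition_p_one_general q β c6 T0 hq hβ hc6 hT0 c k hc hk hcl hkl
end

section
/- Let $q>1$, $\omega>0$, $\gamma>0$, $c_7>0$. Suppose $c:[0,\infty)\to[0,\infty)$ is continuous with $c(t)\le\omega/t$ for all $t\ge T_0>1$, and $k:[0,\infty)\to[0,\infty)$ is continuous with $k(t)\le c_7\, t^{-(\omega(q-1)+2)}(\ln t)^{-1-\gamma}$ for all $t\ge T_0$. Then $\int_0^\infty k(t)\exp\big(-\int_0^t c(s)\,ds\big)\int_0^t \exp\big(q\int_0^\tau c(s)\,ds\big)\,d\tau\,dt<\infty$. -/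
/-!
Write `C t = ∫₀ᵗ c`. As `C` is nondecreasing, the inner integral is at most `t * exp (q * C t)`,
so the integrand is at most `k t * t * exp ((q - 1) * C t)`. For `t ≥ T0` the bound `c ≤ ω / t`
gives `C t ≤ const + ω * log t`, hence `exp ((q - 1) * C t) ≲ t ^ (ω * (q - 1))`, and the bound
on `k` leaves a multiple of `t⁻¹ * (log t) ^ (-(1 + γ))`, the derivative of
`-(log t) ^ (-γ) / γ`, which is integrable at infinity.
-/

open Filter Set MeasureTheory Topology Real

lemma integrableOn_Ioi_inv_mul_log_rpow {γ T : ℝ} (hγ : 0 < γ) (hT : 1 < T) :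
    IntegrableOn (fun x : ℝ => x⁻¹ * log x ^ (-(1 + γ))) (Ioi T) := by
  have hderiv : ∀ x ∈ Ici T,
      HasDerivAt (fun x : ℝ => -log x ^ (-γ) / γ) (x⁻¹ * log x ^ (-(1 + γ))) x := by
    intro x hx
    have hx : 1 < x := hT.trans_le hx
    have hlog : 0 < log x := log_pos hx
    have h := (((hasDerivAt_rpow_const (p := -γ) (Or.inl hlog.ne')).comp x
      (hasDerivAt_log (by positivity))).neg.div_const γ)
    refine h.congr_deriv ?_
    rw [show -γ - 1 = -(1 + γ) by ring]
    field_simp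
  have hnonneg : ∀ x ∈ Ioi T, 0 ≤ x⁻¹ * log x ^ (-(1 + γ)) := fun x hx => by
    have hx : 1 < x := hT.trans hx
    have := log_pos hx
    positivity
  have hlim : Tendsto (fun x : ℝ => -log x ^ (-γ) / γ) atTop (𝓝 0) := by
    simpa using ((tendsto_rpow_neg_atTop hγ).comp tendsto_log_atTop).neg.div_const γ
  exact integrableOn_Ioi_deriv_of_nonneg' hderiv hnonneg hlim

lemma monotone_primitive_of_nonneg {c : ℝ → ℝ} (hc : ∀ a b, IntervalIntegrable c volume a b)
    (hc0 : ∀ t, 0 ≤ c t) (a : ℝ) : Monotone fun t => ∫ s in a..t, c s := by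
  intro x y hxy
  have hdiff := intervalIntegral.integral_interval_sub_left (hc a y) (hc a x)
  have := intervalIntegral.integral_nonneg (μ := volume) hxy fun s _ => hc0 s
  dsimp only
  linarith

lemma intervalIntegral_le_mul_log_of_le_div {c : ℝ → ℝ} {ω T t : ℝ} (hT : 0 < T) (hTt : T ≤ t)
    (hc : IntervalIntegrable c volume T t) (hcu : ∀ s ∈ Icc T t, c s ≤ ω / s) :
    ∫ s in T..t, c s ≤ ω * (log t - log T) := by
  have hinv : IntervalIntegrable (fun s => ω * s⁻¹) volume T t :=
    (intervalIntegral.intervalIntegrable_inv (fun s hs => by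
      rw [uIcc_of_le hTt] at hs; exact (hT.trans_le hs.1).ne') continuousOn_id).const_mul ω
  calc ∫ s in T..t, c s ≤ ∫ s in T..t, ω * s⁻¹ :=
        intervalIntegral.integral_mono_on hTt hc hinv fun s hs => by
          simpa [div_eq_mul_inv] using hcu s hs
    _ = ω * (log t - log T) := by
        rw [intervalIntegral.integral_const_mul, integral_inv_of_pos hT (hT.trans_le hTt),
          log_div (by linarith) hT.ne']

lemma intervalIntegral_le_mul_of_monotoneOn {g : ℝ → ℝ} {a b : ℝ} (hab : a ≤ b)
    (hg : MonotoneOn g (Icc a b)) : ∫ x in a..b, g x ≤ (b - a) * g b := by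
  have hmem : b ∈ Icc a b := right_mem_Icc.2 hab
  calc ∫ x in a..b, g x ≤ ∫ _ in a..b, g b :=
        intervalIntegral.integral_mono_on hab
          (by rw [← uIcc_of_le hab] at hg; exact hg.intervalIntegrable) intervalIntegrable_const
          fun x hx => hg hx hmem hx.2
    _ = (b - a) * g b := by simp

lemma exp_mul_le_mul_rpow {x A ω r t : ℝ} (hr : 0 ≤ r) (ht : 0 < t) (hx : x ≤ A + ω * log t) :
    exp (r * x) ≤ exp (r * A) * t ^ (ω * r) :=
  calc exp (r * x) ≤ exp (r * (A + ω * log t)) := by gcongr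
    _ = exp (r * A) * t ^ (ω * r) := by
        rw [rpow_def_of_pos ht, ← exp_add]; ring_nf

lemma mul_self_mul_rpow_le_of_le_rpow {k t a L C : ℝ} (ht : 0 < t)
    (hk : k ≤ C * t ^ (-(a + 2)) * L) : k * t * t ^ a ≤ C * (t⁻¹ * L) := by
  have hpow : t ^ (-(a + 2)) * t * t ^ a = t⁻¹ := by
    rw [← rpow_add_one ht.ne', ← rpow_add ht, ← rpow_neg_one]
    ring_nf
  calc k * t * t ^ a ≤ C * t ^ (-(a + 2)) * L * t * t ^ a := by gcongr
    _ = C * (t ^ (-(a + 2)) * t * t ^ a * L) := by ring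
    _ = C * (t⁻¹ * L) := by rw [hpow]

lemma mul_exp_neg_mul_integral_exp_le {C : ℝ → ℝ} (hC : Monotone C) {q ω A κ t : ℝ}
    (hq : 1 ≤ q) (ht : 0 < t) (hκ : 0 ≤ κ) (hCt : C t ≤ A + ω * log t) :
    κ * exp (-C t) * ∫ τ in (0:ℝ)..t, exp (q * C τ) ≤
      exp ((q - 1) * A) * (κ * t * t ^ (ω * (q - 1))) := by
  have hinner : ∫ τ in (0:ℝ)..t, exp (q * C τ) ≤ (t - 0) * exp (q * C t) :=
    intervalIntegral_le_mul_of_monotoneOn ht.le fun x _ y _ hxy => by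
      gcongr; exact hC hxy
  calc κ * exp (-C t) * ∫ τ in (0:ℝ)..t, exp (q * C τ)
      ≤ κ * exp (-C t) * ((t - 0) * exp (q * C t)) := by gcongr
    _ = exp ((q - 1) * C t) * (κ * t) := by
        rw [sub_zero, sub_one_mul, sub_eq_neg_add, exp_add]; ring
    _ ≤ exp ((q - 1) * A) * t ^ (ω * (q - 1)) * (κ * t) := by
        gcongr
        exact exp_mul_le_mul_rpow (by linarith) ht hCt
    _ = exp ((q - 1) * A) * (κ * t * t ^ (ω * (q - 1))) := by ring

theorem convergence_condition_p_one_general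
    (q ω γ c7 T0 : ℝ) (hq : 1 < q) (hγ : 0 < γ)
    (hT0 : 1 < T0)
    (c k : ℝ → ℝ) (hc : Continuous c) (hk : Continuous k)
    (hc0 : ∀ t, 0 ≤ c t) (hk0 : ∀ t, 0 ≤ k t)
    (hcu : ∀ t ≥ T0, c t ≤ ω / t)
    (hku : ∀ t ≥ T0, k t ≤ c7 * t ^ (-(ω * (q - 1) + 2)) * (Real.log t) ^ (-(1 + γ))) :
    IntegrableOn (fun t =>
        k t * Real.exp (-∫ s in (0:ℝ)..t, c s) *
          ∫ τ in (0:ℝ)..t, Real.exp (q * ∫ s in (0:ℝ)..τ, c s))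
      (Set.Ici 0) := by
  have hci : ∀ a b, IntervalIntegrable c volume a b := fun a b => hc.intervalIntegrable a b
  set C : ℝ → ℝ := fun t => ∫ s in (0:ℝ)..t, c s
  have hCmono : Monotone C := monotone_primitive_of_nonneg hci hc0 0
  have hCtail : ∀ t ≥ T0, C t ≤ (C T0 - ω * log T0) + ω * log t := fun t ht => by
    have := intervalIntegral_le_mul_log_of_le_div (by linarith) ht (hci T0 t)
      fun s hs => hcu s hs.1
    rw [← intervalIntegral.integral_interval_sub_left (hci 0 t) (hci 0 T0)] at this
    linarith
  have hcont : Continuous fun t => k t * exp (-C t) * ∫ τ in (0:ℝ)..t, exp (q * C τ) := by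
    have hCc : Continuous C := intervalIntegral.continuous_primitive hci 0
    exact (hk.mul (hCc.neg.rexp)).mul (intervalIntegral.continuous_primitive
      (fun a b => (continuous_const.mul hCc).rexp.intervalIntegrable a b) 0)
  rw [← Icc_union_Ioi_eq_Ici (by linarith : (0:ℝ) ≤ T0)]
  refine hcont.integrableOn_Icc.union <|
    ((integrableOn_Ioi_inv_mul_log_rpow hγ hT0).const_mul
      (exp ((q - 1) * (C T0 - ω * log T0)) * c7)).mono' hcont.aestronglyMeasurable.restrict ?_
  filter_upwards [ae_restrict_mem measurableSet_Ioi] with t (ht : T0 < t)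
  have ht0 : 0 < t := by linarith
  have hinner0 : 0 ≤ ∫ τ in (0:ℝ)..t, exp (q * C τ) :=
    intervalIntegral.integral_nonneg ht0.le fun _ _ => (exp_pos _).le
  rw [norm_of_nonneg (by have := hk0 t; positivity), mul_assoc (exp _)]
  exact (mul_exp_neg_mul_integral_exp_le hCmono hq.le ht0 (hk0 t) (hCtail t ht.le)).trans <|
    mul_le_mul_of_nonneg_left (mul_self_mul_rpow_le_of_le_rpow ht0 (hku t ht.le)) (exp_pos _).le

theorem convergence_condition_p_one
    (q ω γ c7 T0 : ℝ) (hq : 1 < q) (hω : 0 < ω) (hγ : 0 < γ) (hc7 : 0 < c7)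
    (hT0 : 1 < T0)
    (c k : ℝ → ℝ) (hc : Continuous c) (hk : Continuous k)
    (hc0 : ∀ t, 0 ≤ c t) (hk0 : ∀ t, 0 ≤ k t)
    (hcu : ∀ t ≥ T0, c t ≤ ω / t)
    (hku : ∀ t ≥ T0, k t ≤ c7 * t ^ (-(ω * (q - 1) + 2)) * (Real.log t) ^ (-(1 + γ))) :
    IntegrableOn (fun t =>
        k t * Real.exp (-∫ s in (0:ℝ)..t, c s) *
          ∫ τ in (0:ℝ)..t, Real.exp (q * ∫ s in (0:ℝ)..τ, c s))
      (Set.Ici 0) :=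
  convergence_condition_p_one_general q ω γ c7 T0 hq hγ hT0 c k hc hk hc0 hk0 hcu hku
end
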